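/- arXiv:1501.00327 — 3 statements merged into one kernel-verified Lean document; each statement's English description precedes it below -/
import Mathlib

section
/- The matroid M_4, obtained from the cycle matroid of the wheel W_4 by adding an element γ whose fundamental circuit with respect to the spoke basis B is B ∪ {γ}, is isomorphic to the dual of the cycle matroid of K_{3,3}. -/
open Set Matroid
open scoped Classical

/-- `M` is the binary matroid on ground set `E` represented by the vectors `v`. -/
def IsBinRepOn {α W : Type*} [AddCommGroup W] [Module (ZMod 2) W]
    (M : Matroid α) (E : Set α) (v : α → W) : Prop :=
  M.E = E ∧ ∀ I ⊆ E, (M.Indep I ↔ LinearIndependent (ZMod 2) (fun x : I => v x))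

/-- Isomorphism of matroids: a bijection of ground sets preserving independence. -/
def MatroidIso {α β : Type*} (M : Matroid α) (N : Matroid β) : Prop :=
  ∃ e : M.E ≃ N.E, ∀ I : Set M.E,
    (M.Indep (Subtype.val '' I) ↔ N.Indep (Subtype.val '' (e '' I)))

/-- The incidence vector of an edge, over GF(2). -/
noncomputable def incVec {V : Type*} (e : Sym2 V) : V → ZMod 2 :=
  fun v => if v ∈ e then 1 else 0

/-- `M` is the cycle matroid of the graph `G`, i.e. the binary matroid on the edge set of `G`
represented by the GF(2) incidence vectors of the edges. -/
def IsCycleMatroidOf {V : Type*} (M : Matroid (Sym2 V)) (G : SimpleGraph V) : Prop :=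
  IsBinRepOn M G.edgeSet incVec

/-- Deletion of a set of elements from a matroid. -/
def mDel {α : Type*} (M : Matroid α) (D : Set α) : Matroid α := M ↾ (M.E \ D)

/-- Contraction of a set of elements in a matroid. -/
def mCon {α : Type*} (M : Matroid α) (C : Set α) : Matroid α := (mDel M✶ C)✶

/-- A circuit of a matroid: a minimal dependent set. -/
def mCircuit {α : Type*} (M : Matroid α) (C : Set α) : Prop :=
  C ⊆ M.E ∧ ¬ M.Indep C ∧ ∀ x ∈ C, M.Indep (C \ {x})

/-- A cocircuit of a matroid: a circuit of the dual. -/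
def mCocircuit {α : Type*} (M : Matroid α) (C : Set α) : Prop := mCircuit M✶ C

/-- The rank of a set in a matroid: the supremum of cardinalities of independent subsets. -/
noncomputable def mRk {α : Type*} (M : Matroid α) (X : Set α) : ℕ :=
  sSup (Set.ncard '' {I | I ⊆ X ∧ M.Indep I})

/-- A `k`-separation of a matroid. -/
def mKSep {α : Type*} (M : Matroid α) (k : ℕ) (X Y : Set α) : Prop :=
  Disjoint X Y ∧ X ∪ Y = M.E ∧ k ≤ X.ncard ∧ k ≤ Y.ncard ∧
    mRk M X + mRk M Y + 1 ≤ mRk M M.E + k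

/-- A matroid is `3`-connected if it has no 1- or 2-separations. -/
def mThreeConnected {α : Type*} (M : Matroid α) : Prop :=
  (∀ X Y, ¬ mKSep M 1 X Y) ∧ (∀ X Y, ¬ mKSep M 2 X Y)

/-- A matroid is internally 4-connected if it is 3-connected and
every 3-separation has a side of size exactly 3. -/
def mInternally4 {α : Type*} (M : Matroid α) : Prop :=
  mThreeConnected M ∧ ∀ X Y, mKSep M 3 X Y → min X.ncard Y.ncard = 3

/-- A matroid is binary if it is representable over GF(2). -/
def mBinary {α : Type*} (M : Matroid α) : Prop :=
  ∃ (n : ℕ) (v : α → (Fin n → ZMod 2)), IsBinRepOn M M.E v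

/-- `M` is the uniform matroid of rank `r` on all of `α`. -/
def mUniformOf {α : Type*} (M : Matroid α) (r : ℕ) : Prop :=
  M.E = univ ∧ ∀ I : Set α, (M.Indep I ↔ I.ncard ≤ r)

/-- The points of the binary projective space of rank 4, `PG(3,2)`. -/
abbrev PGpt (n : ℕ) := {v : Fin n → ZMod 2 // v ≠ 0}

/-- The quartic Möbius ladder on `2n+1` vertices. -/
def qml (n : ℕ) : SimpleGraph (ZMod (2 * n + 1)) :=
  SimpleGraph.circulantGraph {1, (n : ZMod (2 * n + 1))}

/-- The cubic Möbius ladder on `2n` vertices. -/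
def cml (n : ℕ) : SimpleGraph (ZMod (2 * n)) :=
  SimpleGraph.circulantGraph {1, (n : ZMod (2 * n))}
/-- The wheel graph `W_n`, with hub `none` and rim vertices `some i` for `i : ZMod n`. -/
def wheelGraph (n : ℕ) : SimpleGraph (Option (ZMod n)) :=
  SimpleGraph.fromRel (fun a b => a = none ∨ ∃ i, a = some i ∧ b = some (i + 1))

/-- The ground set of `M_n`: the edges of the wheel `W_n` together with the new element γ. -/
def wheelPlusGround (n : ℕ) : Set (Sym2 (Option (ZMod n)) ⊕ Unit) :=
  (Sum.inl '' (wheelGraph n).edgeSet) ∪ {Sum.inr ()}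

/-- The binary representation of `M_n`: wheel edges are represented by their GF(2) incidence
vectors, and γ is represented by the sum of the spoke vectors, so that the fundamental circuit
of γ with respect to the spoke basis `B` is `B ∪ {γ}`. -/
noncomputable def wheelPlusVec (n : ℕ) [NeZero n] :
    Sym2 (Option (ZMod n)) ⊕ Unit → (Option (ZMod n) → ZMod 2) :=
  Sum.elim incVec (fun _ => ∑ i : ZMod n, incVec s((none : Option (ZMod n)), some i))

/-!
Both matroids are binary, of rank 4 on nine elements. Label the elements of `M_4` by the edges
`(i, j)` of `K_{3,3}` so that the six triangles of `M_4` become the six vertex stars. Then the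
linear dependencies among the vectors representing `M_4` are exactly the cuts of `K_{3,3}`: the
vectors `c` with `c (i, j) = a i + b j`, i.e. the row space of the incidence matrix of `K_{3,3}`.
A binary matroid whose space of dependencies is the row space of a representation of `N` is `N✶`:
a set of columns is independent iff a linear functional vanishing on the remaining columns of the
other matrix vanishes everywhere, i.e. iff those remaining columns span.
-/

open Function
open Submodule (span)

namespace IsBinRepOn

variable {α W : Type*} [AddCommGroup W] [Module (ZMod 2) W] {M : Matroid α} {E : Set α}
  {v : α → W} {I X : Set α} {e : α}

lemma indep_iff (hM : IsBinRepOn M E v) (hI : I ⊆ E) :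
    M.Indep I ↔ LinearIndepOn (ZMod 2) v I :=
  hM.2 I hI

lemma mem_closure_iff_of_indep (hM : IsBinRepOn M E v) (hI : M.Indep I) (he : e ∈ E) :
    e ∈ M.closure I ↔ v e ∈ span (ZMod 2) (v '' I) := by
  have hIE : I ⊆ E := hM.1 ▸ hI.subset_ground
  have hIv : LinearIndepOn (ZMod 2) v I := (hM.indep_iff hIE).1 hI
  rw [hI.mem_closure_iff', hM.indep_iff (insert_subset he hIE), linearIndepOn_insert_iff, hM.1]
  have : e ∈ I → v e ∈ span (ZMod 2) (v '' I) :=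
    fun h => Submodule.subset_span (mem_image_of_mem v h)
  tauto

lemma mem_closure_iff (hM : IsBinRepOn M E v) (hX : X ⊆ E) (he : e ∈ E) :
    e ∈ M.closure X ↔ v e ∈ span (ZMod 2) (v '' X) := by
  obtain ⟨I, hIX⟩ := M.exists_isBasis X (hM.1 ▸ hX)
  have hspan : span (ZMod 2) (v '' I) = span (ZMod 2) (v '' X) := by
    refine le_antisymm (Submodule.span_mono (image_mono hIX.subset)) (Submodule.span_le.2 ?_)
    rintro _ ⟨x, hx, rfl⟩
    exact (hM.mem_closure_iff_of_indep hIX.indep (hX hx)).1 (hIX.subset_closure hx)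
  rw [← hIX.closure_eq_closure, hM.mem_closure_iff_of_indep hIX.indep he, hspan]

lemma spanning_iff (hM : IsBinRepOn M E v) (hX : X ⊆ E) :
    M.Spanning X ↔ span (ZMod 2) (v '' X) = span (ZMod 2) (v '' E) := by
  have hle : span (ZMod 2) (v '' X) ≤ span (ZMod 2) (v '' E) :=
    Submodule.span_mono (image_mono hX)
  rw [spanning_iff_ground_subset_closure (hM.1 ▸ hX), eq_comm, ← LE.le.ge_iff_eq' hle,
    Submodule.span_le, hM.1]
  refine ⟨fun h => ?_, fun h e he => (hM.mem_closure_iff hX he).2 (h (mem_image_of_mem v he))⟩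
  rintro _ ⟨e, he, rfl⟩
  exact (hM.mem_closure_iff hX he).1 (h he)

lemma dual_indep_iff (hM : IsBinRepOn M E v) :
    M✶.Indep I ↔ I ⊆ E ∧ span (ZMod 2) (v '' (E \ I)) = span (ZMod 2) (v '' E) := by
  rw [← coindep_def]
  refine ⟨fun h => ?_, fun ⟨hIE, h⟩ => ?_⟩
  · have hIE : I ⊆ E := hM.1 ▸ h.subset_ground
    rw [coindep_iff_compl_spanning (hM.1 ▸ hIE), hM.1, hM.spanning_iff sdiff_subset] at h
    exact ⟨hIE, h⟩
  · rwa [coindep_iff_compl_spanning (hM.1 ▸ hIE), hM.1, hM.spanning_iff sdiff_subset]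

end IsBinRepOn

theorem linearIndepOn_iff_span_image_compl_eq {K ι V W : Type*} [Field K] [Fintype ι]
    [AddCommGroup V] [Module K V] [AddCommGroup W] [Module K W] {u : ι → V} {w : ι → W}
    (huw : ∀ c : ι → K, ∑ i, c i • u i = 0 ↔ ∃ φ : Module.Dual K W, ∀ i, φ (w i) = c i)
    (S : Set ι) : LinearIndepOn K u S ↔ span K (w '' Sᶜ) = span K (range w) := by
  have huw' : ∀ l : ι →₀ K, Finsupp.linearCombination K u l = 0 ↔
      ∃ φ : Module.Dual K W, ∀ i, φ (w i) = l i := by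
    intro l
    rw [Finsupp.linearCombination_apply, Finsupp.sum_fintype _ _ (by simp), huw]
  rw [linearIndepOn_iff]
  constructor
  · intro h
    refine le_antisymm (Submodule.span_mono (image_subset_range w _)) (Submodule.span_le.2 ?_)
    rintro _ ⟨i, rfl⟩
    by_contra hi
    obtain ⟨φ, hφi, hφ⟩ := Submodule.exists_le_ker_of_notMem hi
    set l := Finsupp.equivFunOnFinite.symm (φ ∘ w)
    have hl : l ∈ Finsupp.supported K K S := fun j hj => by
      by_contra hjS
      exact Finsupp.mem_support_iff.1 hj (hφ (Submodule.subset_span (mem_image_of_mem w hjS)))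
    have := h l hl ((huw' l).2 ⟨φ, fun _ => rfl⟩)
    exact hφi (DFunLike.congr_fun this i)
  · intro hspan l hl hcomb
    obtain ⟨φ, hφ⟩ := (huw' l).1 hcomb
    have hker : span K (w '' Sᶜ) ≤ LinearMap.ker φ := by
      rw [Submodule.span_le]
      rintro _ ⟨j, hj, rfl⟩
      rw [SetLike.mem_coe, LinearMap.mem_ker, hφ]
      exact Finsupp.notMem_support_iff.1 (fun h => hj (hl h))
    ext i
    rw [← hφ, Finsupp.coe_zero, Pi.zero_apply, ← LinearMap.mem_ker]
    exact hker (hspan ▸ Submodule.subset_span (mem_range_self i))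

theorem IsBinRepOn.indep_image_iff_dual_indep_image {ι α β W W' : Type*} [Fintype ι]
    [AddCommGroup W] [Module (ZMod 2) W] [AddCommGroup W'] [Module (ZMod 2) W']
    {M : Matroid α} {N : Matroid β} {E : Set α} {F : Set β} {u : α → W} {w : β → W'}
    (hM : IsBinRepOn M E u) (hN : IsBinRepOn N F w) {f : ι → α} {g : ι → β}
    (hf : Injective f) (hg : Injective g) (hfE : range f = E) (hgF : range g = F)
    (huw : ∀ c : ι → ZMod 2, ∑ i, c i • u (f i) = 0 ↔
      ∃ φ : Module.Dual (ZMod 2) W', ∀ i, φ (w (g i)) = c i)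
    (S : Set ι) : M.Indep (f '' S) ↔ N✶.Indep (g '' S) := by
  have hcomp : LinearIndepOn (ZMod 2) (u ∘ f) S ↔ LinearIndepOn (ZMod 2) u (f '' S) :=
    ⟨fun h => h.image_of_comp f u, fun h => h.comp_of_image hf.injOn⟩
  rw [hM.indep_iff (hfE ▸ image_subset_range f S), ← hcomp,
    linearIndepOn_iff_span_image_compl_eq (u := u ∘ f) (w := w ∘ g) huw,
    hN.dual_indep_iff, ← hgF, ← image_compl_eq_range_sdiff_image hg, image_comp, range_comp,
    and_iff_right (image_subset_range g S)]

theorem matroidIso_of_injective {ι α β : Type*} {M : Matroid α} {N : Matroid β}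
    {f : ι → α} {g : ι → β} (hf : Injective f) (hg : Injective g)
    (hfE : range f = M.E) (hgE : range g = N.E)
    (h : ∀ S : Set ι, M.Indep (f '' S) ↔ N.Indep (g '' S)) : MatroidIso M N := by
  let eM : ι ≃ M.E := (Equiv.ofInjective f hf).trans (Equiv.setCongr hfE)
  let eN : ι ≃ N.E := (Equiv.ofInjective g hg).trans (Equiv.setCongr hgE)
  refine ⟨eM.symm.trans eN, fun I => ?_⟩
  have hfM : ∀ x, f (eM.symm x) = x := fun x => congrArg Subtype.val (eM.apply_symm_apply x)
  rw [show Subtype.val '' I = f '' (eM.symm '' I) by simp only [image_image, hfM],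
    show Subtype.val '' (eM.symm.trans eN '' I) = g '' (eM.symm '' I) by
      rw [image_image, image_image]; rfl]
  exact h _

theorem incVec_mk_of_ne {V : Type*} [DecidableEq V] {a b : V} (hab : a ≠ b) :
    incVec s(a, b) = Pi.single a 1 + Pi.single b 1 := by
  ext v
  by_cases hva : v = a <;> by_cases hvb : v = b <;> simp_all [incVec]

section CompleteBipartite

variable {α β : Type*}

def bipartiteEdge (p : α × β) : Sym2 (α ⊕ β) := s(.inl p.1, .inr p.2)

lemma bipartiteEdge_injective : Injective (bipartiteEdge (α := α) (β := β)) := by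
  rintro ⟨i, j⟩ ⟨i', j'⟩ h
  simpa [bipartiteEdge, Sym2.eq_iff] using h

lemma range_bipartiteEdge : range bipartiteEdge = (completeBipartiteGraph α β).edgeSet := by
  ext e
  induction e using Sym2.ind with
  | h a b => rcases a with a | a <;> rcases b with b | b <;> simp [bipartiteEdge, Sym2.eq_swap]

lemma exists_dual_incVec_bipartiteEdge_iff [Fintype α] [Fintype β] (c : α × β → ZMod 2) :
    (∃ φ : Module.Dual (ZMod 2) (α ⊕ β → ZMod 2), ∀ p, φ (incVec (bipartiteEdge p)) = c p) ↔
      ∃ (a : α → ZMod 2) (b : β → ZMod 2), ∀ i j, c (i, j) = a i + b j := by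
  have hinc (p : α × β) :
      incVec (bipartiteEdge p) = Pi.single (.inl p.1) 1 + Pi.single (.inr p.2) 1 :=
    incVec_mk_of_ne Sum.inl_ne_inr
  constructor
  · rintro ⟨φ, hφ⟩
    exact ⟨fun i => φ (Pi.single (.inl i) 1), fun j => φ (Pi.single (.inr j) 1),
      fun i j => by rw [← hφ, hinc, map_add]⟩
  · rintro ⟨a, b, hab⟩
    exact ⟨Fintype.linearCombination (ZMod 2) (Sum.elim a b), fun ⟨i, j⟩ => by simp [hinc, hab]⟩

end CompleteBipartite

theorem incVec_apply {V : Type*} [DecidableEq V] (e : Sym2 V) (v : V) :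
    incVec e v = if v ∈ e then 1 else 0 := by
  unfold incVec; congr

theorem wheelPlusVec_inr (n : ℕ) [NeZero n] (v : Option (ZMod n)) :
    wheelPlusVec n (.inr ()) v = if v = none then (n : ZMod 2) else 1 := by
  simp only [wheelPlusVec, Sum.elim_inr, Finset.sum_apply, incVec_apply, Sym2.mem_iff]
  rcases v with _ | j <;> simp

theorem wheelPlusVec_four : wheelPlusVec 4 =
    Sum.elim (fun e v => if v ∈ e then 1 else 0) (fun _ v => if v = none then 0 else 1) := by
  funext x v
  rcases x with e | ⟨⟩
  · exact incVec_apply e v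
  · rw [wheelPlusVec_inr]; rfl

theorem mem_edgeSet_wheelGraph {n : ℕ} {e : Sym2 (Option (ZMod n))} :
    e ∈ (wheelGraph n).edgeSet ↔
      (∃ i, e = s(none, some i)) ∨ ∃ i, i + 1 ≠ i ∧ e = s(some i, some (i + 1)) := by
  induction e using Sym2.ind with
  | h a b =>
  simp only [SimpleGraph.mem_edgeSet, wheelGraph, SimpleGraph.fromRel_adj]
  constructor
  · rintro ⟨hab, (rfl | ⟨i, rfl, rfl⟩) | (rfl | ⟨i, rfl, rfl⟩)⟩
    · obtain ⟨j, rfl⟩ := Option.ne_none_iff_exists'.mp (Ne.symm hab)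
      exact .inl ⟨j, rfl⟩
    · exact .inr ⟨i, fun h => hab (by rw [h]), rfl⟩
    · obtain ⟨j, rfl⟩ := Option.ne_none_iff_exists'.mp hab
      exact .inl ⟨j, Sym2.eq_swap⟩
    · exact .inr ⟨i, fun h => hab (by rw [h]), Sym2.eq_swap⟩
  · rintro (⟨i, h⟩ | ⟨i, hi, h⟩) <;> rcases Sym2.eq_iff.mp h with ⟨rfl, rfl⟩ | ⟨rfl, rfl⟩
    · simp
    · simp
    · exact ⟨by simpa using hi.symm, .inl (.inr ⟨i, rfl, rfl⟩)⟩
    · exact ⟨by simpa using hi, .inr (.inr ⟨i, rfl, rfl⟩)⟩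

theorem mem_wheelPlusGround {n : ℕ} {x : Sym2 (Option (ZMod n)) ⊕ Unit} :
    x ∈ wheelPlusGround n ↔ x = .inr () ∨ (∃ i, x = .inl s(none, some i)) ∨
      ∃ i, i + 1 ≠ i ∧ x = .inl s(some i, some (i + 1)) := by
  rcases x with e | ⟨⟩ <;> simp [wheelPlusGround, mem_edgeSet_wheelGraph]

/-- Row `i` and column `j` of this table are the six triangles of `M_4`; they are matched with
the stars of the vertices `inl i` and `inr j` of `K_{3,3}`. -/
def m4Table : Fin 3 × Fin 3 → Sym2 (Option (ZMod 4)) ⊕ Unit := fun p =>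
  ![![.inl s(none, some 0), .inl s(none, some 1), .inl s(some 0, some 1)],
    ![.inl s(none, some 3), .inl s(none, some 2), .inl s(some 2, some 3)],
    ![.inl s(some 3, some 0), .inl s(some 1, some 2), .inr ()]] p.1 p.2

lemma m4Table_injective : Injective m4Table := by decide

lemma range_m4Table : range m4Table = wheelPlusGround 4 := by
  ext x
  rw [mem_wheelPlusGround]
  constructor
  · rintro ⟨p, rfl⟩
    revert p
    decide
  · rintro (rfl | ⟨i, rfl⟩ | ⟨i, -, rfl⟩)
    · exact ⟨(2, 2), rfl⟩
    · revert i; decide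
    · revert i; decide

lemma sum_wheelPlusVec_m4Table_row (i : Fin 3) : ∑ j, wheelPlusVec 4 (m4Table (i, j)) = 0 := by
  ext v
  rw [Finset.sum_apply, wheelPlusVec_four]
  revert i v
  decide

lemma sum_wheelPlusVec_m4Table_col (j : Fin 3) : ∑ i, wheelPlusVec 4 (m4Table (i, j)) = 0 := by
  ext v
  rw [Finset.sum_apply, wheelPlusVec_four]
  revert j v
  decide

lemma m4Table_rectangle {c : Fin 3 × Fin 3 → ZMod 2}
    (hc : ∑ p, c p • wheelPlusVec 4 (m4Table p) = 0) (i j : Fin 3) :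
    c (i, j) = c (i, 0) + c (0, j) + c (0, 0) := by
  -- the coordinates at the hub and at the rim vertices 0, 1, 3 generate all rectangle relations
  have hub := congrFun hc none
  have h0 := congrFun hc (some 0)
  have h1 := congrFun hc (some 1)
  have h3 := congrFun hc (some 3)
  simp (config := { decide := true }) only [m4Table, Matrix.cons_val', Matrix.cons_val_fin_one,
    wheelPlusVec_four, Finset.sum_apply, Pi.smul_apply, smul_eq_mul, Fintype.sum_prod_type,
    Fin.sum_univ_three, Fin.isValue, Matrix.cons_val_zero, Matrix.cons_val_one, Matrix.cons_val,
    Sum.elim_inl, Sum.elim_inr, ↓reduceIte, mul_one, mul_zero, add_zero, zero_add,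
    Pi.zero_apply] at hub h0 h1 h3
  fin_cases i <;> fin_cases j <;> grind

lemma sum_smul_wheelPlusVec_m4Table_eq_zero_iff (c : Fin 3 × Fin 3 → ZMod 2) :
    ∑ p, c p • wheelPlusVec 4 (m4Table p) = 0 ↔
      ∃ (a b : Fin 3 → ZMod 2), ∀ i j, c (i, j) = a i + b j := by
  constructor
  · intro hc
    exact ⟨fun i => c (i, 0) + c (0, 0), fun j => c (0, j),
      fun i j => by rw [m4Table_rectangle hc]; ring⟩
  · rintro ⟨a, b, hab⟩
    simp only [Fintype.sum_prod_type, hab, add_smul, Finset.sum_add_distrib, ← Finset.smul_sum,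
      sum_wheelPlusVec_m4Table_row, smul_zero, Finset.sum_const_zero, zero_add]
    rw [Finset.sum_comm]
    simp only [← Finset.smul_sum, sum_wheelPlusVec_m4Table_col, smul_zero, Finset.sum_const_zero]

/-- `M_4`, the extension of `M(W_4)` by γ with fundamental circuit `B ∪ {γ}`,
is isomorphic to the dual of the cycle matroid of `K_{3,3}`. -/
theorem statement3 (M : Matroid (Sym2 (Option (ZMod 4)) ⊕ Unit))
    (N : Matroid (Sym2 (Fin 3 ⊕ Fin 3)))
    (hM : IsBinRepOn M (wheelPlusGround 4) (wheelPlusVec 4))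
    (hN : IsCycleMatroidOf N (completeBipartiteGraph (Fin 3) (Fin 3))) :
    MatroidIso M N✶ := by
  have hcycles (c : Fin 3 × Fin 3 → ZMod 2) :
      ∑ p, c p • wheelPlusVec 4 (m4Table p) = 0 ↔
        ∃ φ : Module.Dual (ZMod 2) (Fin 3 ⊕ Fin 3 → ZMod 2),
          ∀ p, φ (incVec (bipartiteEdge p)) = c p :=
    (sum_smul_wheelPlusVec_m4Table_eq_zero_iff c).trans
      (exists_dual_incVec_bipartiteEdge_iff c).symm
  refine matroidIso_of_injective m4Table_injective bipartiteEdge_injective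
    (hM.1 ▸ range_m4Table) (by rw [dual_ground, hN.1, range_bipartiteEdge]) ?_
  exact IsBinRepOn.indep_image_iff_dual_indep_image hM hN m4Table_injective
    bipartiteEdge_injective range_m4Table range_bipartiteEdge hcycles
end

section
/- Let r ≥ 6 be even, and let M_{r+1} be the binary extension of the rank-(r+1) wheel M(W_{r+1}) by an element γ whose fundamental circuit with the spoke basis is the whole spoke basis together with γ. Label the spokes in cyclic order x_0, x_1, …, x_r and let {x_i, y_i, x_{i+1}} be the rim triangles (indices mod r+1). Then for each i with 0 ≤ i ≤ r, the set {y_i, x_{i+1}, y_{i+1}, γ} is a cocircuit of M_{r+1}. -/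
open Set Matroid
open scoped Classical

/-- The spoke `x_i` of `M_{r+1}`. -/
def xe (r : ℕ) (i : ZMod (r + 1)) : ZMod (r + 1) ⊕ (ZMod (r + 1) ⊕ Unit) := Sum.inl i

/-- The rim element `y_i` of `M_{r+1}`, lying in the triangle `{x_i, y_i, x_{i+1}}`. -/
def ye (r : ℕ) (i : ZMod (r + 1)) : ZMod (r + 1) ⊕ (ZMod (r + 1) ⊕ Unit) :=
  Sum.inr (Sum.inl i)

/-- The extension element γ of `M_{r+1}`. -/
def ge (r : ℕ) : ZMod (r + 1) ⊕ (ZMod (r + 1) ⊕ Unit) := Sum.inr (Sum.inr ())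

/-- The binary representation of `M_{r+1}`: the wheel `W_{r+1}` has hub `none` and rim vertices
`some i`; the spoke `x_i` and rim edge `y_i` get their incidence vectors, and γ is represented
by the sum of the spoke vectors, so that its fundamental circuit with respect to the spoke
basis `B = {x_0, …, x_r}` is `B ∪ {γ}`. -/
noncomputable def mWVec (r : ℕ) :
    ZMod (r + 1) ⊕ (ZMod (r + 1) ⊕ Unit) → (Option (ZMod (r + 1)) → ZMod 2) :=
  Sum.elim (fun i => incVec s((none : Option (ZMod (r + 1))), some i))
    (Sum.elim (fun i => incVec s((some i : Option (ZMod (r + 1))), some (i + 1)))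
      (fun _ => ∑ i : ZMod (r + 1), incVec s((none : Option (ZMod (r + 1))), some i)))

/-!
Evaluation at the rim vertex `i + 1` is a linear functional `φ` whose support on the
representation is exactly `{y_i, x_{i+1}, y_{i+1}, γ}`. The spokes form a base on which `φ`
vanishes except at `x_{i+1}`, so this support is the fundamental cocircuit of `x_{i+1}`: every
base meets it, since a base inside `ker φ` would stay independent after adding `x_{i+1}`; and for
each `e` in it, exchanging `x_{i+1}` for `e` among the spokes gives a base that avoids the rest
of the support.
-/

open Submodule

section LinearRepresentation

variable {α K W : Type*} [Field K] [AddCommGroup W] [Module K W] {M : Matroid α} {v : α → W}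
  (hM : ∀ I ⊆ M.E, M.Indep I ↔ LinearIndepOn K v I)
include hM

lemma Matroid.Indep.isBase_of_forall_mem_span {B : Set α} (hB : M.Indep B)
    (hspan : ∀ e ∈ M.E, v e ∈ span K (v '' B)) : M.IsBase B := by
  refine hB.isBase_of_maximal fun J hJ hBJ => hBJ.antisymm fun e heJ => by_contra fun heB => ?_
  have heE := hJ.subset_ground heJ
  have hins := (hM _ (insert_subset heE hB.subset_ground)).1 (hJ.subset (insert_subset heJ hBJ))
  exact ((linearIndepOn_insert heB).1 hins).2 (hspan e heE)

lemma Matroid.Indep.insert_indep_of_forall_apply_eq_zero (φ : W →ₗ[K] K) {I : Set α}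
    (hI : M.Indep I) (hIφ : ∀ x ∈ I, φ (v x) = 0) {e : α} (he : e ∈ M.E)
    (heφ : φ (v e) ≠ 0) : M.Indep (insert e I) := by
  have hspan : span K (v '' I) ≤ LinearMap.ker φ :=
    span_le.2 (by rintro _ ⟨x, hx, rfl⟩; exact hIφ x hx)
  rw [hM _ (insert_subset he hI.subset_ground), linearIndepOn_insert fun h => heφ (hIφ e h)]
  exact ⟨(hM I hI.subset_ground).1 hI, fun h => heφ (hspan h)⟩

theorem Matroid.IsBase.isCocircuit_setOf_apply_ne_zero (φ : W →ₗ[K] K) {B : Set α}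
    (hB : M.IsBase B) {b : α} (hb : b ∈ B) (hφb : φ (v b) ≠ 0)
    (hφB : ∀ x ∈ B, x ≠ b → φ (v x) = 0) :
    M.IsCocircuit {e ∈ M.E | φ (v e) ≠ 0} := by
  rw [isCocircuit_def, isCircuit_iff_dep_forall_sdiff_singleton_indep, dual_dep_iff_forall]
  refine ⟨⟨fun B' hB' => ?_, sep_subset _ _⟩, fun x hx => ?_⟩
  · by_contra hdisj
    have hB'φ : ∀ y ∈ B', φ (v y) = 0 := fun y hy =>
      by_contra fun h => hdisj ⟨y, ⟨hB'.subset_ground hy, h⟩, hy⟩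
    have hbB' :=
      hB'.indep.insert_indep_of_forall_apply_eq_zero hM φ hB'φ (hB.subset_ground hb) hφb
    have hB'_eq := hB'.eq_of_subset_indep hbB' (subset_insert _ _)
    exact hφb (hB'φ b (hB'_eq ▸ mem_insert b B'))
  · have hBb : ∀ y ∈ B \ {b}, φ (v y) = 0 := fun y hy => hφB y hy.1 hy.2
    have hxB : M.IsBase (insert x (B \ {b})) := by
      obtain rfl | hxb := eq_or_ne x b
      · rwa [insert_sdiff_singleton, insert_eq_of_mem hb]
      · exact hB.exchange_isBase_of_indep (fun hxB => hx.2 (hφB x hxB hxb))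
          ((hB.indep.subset sdiff_subset).insert_indep_of_forall_apply_eq_zero hM φ hBb hx.1 hx.2)
    refine (dual_indep_iff_exists (sdiff_subset.trans (sep_subset _ _))).2
      ⟨_, hxB, disjoint_left.2 ?_⟩
    rintro y ⟨hyC, hyx⟩ (rfl | hy)
    · exact hyx rfl
    · exact hyC.2 (hBb y hy)

end LinearRepresentation

lemma mCircuit_iff_isCircuit {α : Type*} {M : Matroid α} {C : Set α} :
    mCircuit M C ↔ M.IsCircuit C := by
  rw [isCircuit_iff_dep_forall_sdiff_singleton_indep, Dep, mCircuit]
  tauto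

lemma mCocircuit_iff_isCocircuit {α : Type*} {M : Matroid α} {C : Set α} :
    mCocircuit M C ↔ M.IsCocircuit C :=
  mCircuit_iff_isCircuit

lemma IsBinRepOn.indep_iff_s7 {α W : Type*} [AddCommGroup W] [Module (ZMod 2) W] {M : Matroid α}
    {E : Set α} {v : α → W} (hM : IsBinRepOn M E v) :
    ∀ I ⊆ M.E, M.Indep I ↔ LinearIndepOn (ZMod 2) v I :=
  fun I hI => hM.2 I (hM.1 ▸ hI)

section Wheel

variable (r : ℕ)

@[simp] lemma mWVec_xe_none (j : ZMod (r + 1)) : mWVec r (xe r j) none = 1 := by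
  simp [mWVec, xe, incVec]

@[simp] lemma mWVec_xe_some (j k : ZMod (r + 1)) :
    mWVec r (xe r j) (some k) = if k = j then 1 else 0 := by
  simp [mWVec, xe, incVec]

@[simp] lemma mWVec_ye_none (j : ZMod (r + 1)) : mWVec r (ye r j) none = 0 := by
  simp [mWVec, ye, incVec]

@[simp] lemma mWVec_ye_some (j k : ZMod (r + 1)) :
    mWVec r (ye r j) (some k) = if k = j ∨ k = j + 1 then 1 else 0 := by
  simp [mWVec, ye, incVec]

lemma mWVec_ge : mWVec r (ge r) = ∑ j, mWVec r (xe r j) := by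
  simp [mWVec, ge, xe]

-- For `r = 0` we would have `j = j + 1`, making `y_j` a loop rather than the sum of two spokes.
lemma mWVec_ye (hr : r ≠ 0) (j : ZMod (r + 1)) :
    mWVec r (ye r j) = mWVec r (xe r j) + mWVec r (xe r (j + 1)) := by
  have : Nontrivial (ZMod (r + 1)) := ZMod.nontrivial_iff.2 (by omega)
  funext o
  rcases o with _ | k
  · rw [Pi.add_apply, mWVec_ye_none, mWVec_xe_none, mWVec_xe_none]
    decide
  · rw [Pi.add_apply, mWVec_ye_some, mWVec_xe_some, mWVec_xe_some]
    obtain rfl | hkj := eq_or_ne k j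
    · simp
    · simp [hkj]

lemma setOf_mWVec_apply_some_ne_zero (i : ZMod (r + 1)) :
    {e | mWVec r e (some (i + 1)) ≠ 0} = {ye r i, xe r (i + 1), ye r (i + 1), ge r} := by
  ext (j | j | u)
  · simp [mWVec, xe, ye, ge, incVec, eq_comm]
  · by_cases hji : i = j <;> simp [mWVec, xe, ye, ge, incVec, eq_comm, hji]
  · simp [mWVec, xe, ye, ge, incVec]

lemma linearIndependent_mWVec_xe : LinearIndependent (ZMod 2) (mWVec r ∘ xe r) := by
  rw [Fintype.linearIndependent_iff]
  intro g hg k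
  simpa [Finset.sum_apply] using congrFun hg (some k)

lemma xe_injective : Function.Injective (xe r) := Sum.inl_injective

lemma isBase_range_xe (hr : r ≠ 0) {M : Matroid (ZMod (r + 1) ⊕ (ZMod (r + 1) ⊕ Unit))}
    (hM : IsBinRepOn M univ (mWVec r)) : M.IsBase (range (xe r)) := by
  have hspan (j : ZMod (r + 1)) : mWVec r (xe r j) ∈ span (ZMod 2) (mWVec r '' range (xe r)) :=
    subset_span (mem_image_of_mem _ (mem_range_self j))
  have hindep : M.Indep (range (xe r)) :=
    (hM.indep_iff_s7 _ (hM.1 ▸ subset_univ _)).2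
      ((linearIndepOn_range_iff (xe_injective r) _).2 (linearIndependent_mWVec_xe r))
  refine hindep.isBase_of_forall_mem_span hM.indep_iff_s7 ?_
  rintro (j | j | u) -
  · exact hspan j
  · change mWVec r (ye r j) ∈ _
    rw [mWVec_ye r hr]
    exact add_mem (hspan j) (hspan (j + 1))
  · change mWVec r (ge r) ∈ _
    rw [mWVec_ge]
    exact sum_mem fun j _ => hspan j

end Wheel

theorem statement7_general (r : ℕ) (hr : 6 ≤ r)
    (M : Matroid (ZMod (r + 1) ⊕ (ZMod (r + 1) ⊕ Unit)))
    (hM : IsBinRepOn M univ (mWVec r)) (i : ZMod (r + 1)) :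
    mCocircuit M {ye r i, xe r (i + 1), ye r (i + 1), ge r} := by
  have hspokes := isBase_range_xe r (by omega) hM
  rw [mCocircuit_iff_isCocircuit, ← setOf_mWVec_apply_some_ne_zero, ← sep_univ, ← hM.1]
  refine hspokes.isCocircuit_setOf_apply_ne_zero hM.indep_iff_s7 (LinearMap.proj (some (i + 1)))
    (mem_range_self (i + 1)) (by simp) ?_
  rintro _ ⟨j, rfl⟩ hj
  simp [(ne_of_apply_ne (xe r) hj).symm]

/-- For even `r ≥ 6` and each `i`, the set `{y_i, x_{i+1}, y_{i+1}, γ}` is a cocircuit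
of `M_{r+1}`. -/
theorem statement7 (r : ℕ) (hr : 6 ≤ r) (hre : Even r)
    (M : Matroid (ZMod (r + 1) ⊕ (ZMod (r + 1) ⊕ Unit)))
    (hM : IsBinRepOn M univ (mWVec r)) (i : ZMod (r + 1)) :
    mCocircuit M {ye r i, xe r (i + 1), ye r (i + 1), ge r} :=
  statement7_general r hr M hM i
end

section
/- Let r ≥ 6 be even and let M_{r+1} be the binary extension of the rank-(r+1) wheel by γ as above. Then the minor M_{r+1}/{y_{r−1}, y_r}\{x_{r−1}, x_0} is isomorphic to M_{r−1}. Equivalently, the dual triadic Möbius matroid Υ_r* is obtained from Υ_{r+2}* by this contraction and deletion. -/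
open Set Matroid
open scoped Classical

/-!
Contracting the rim edges `y_{r-1} = {r-1, r}` and `y_r = {r, 0}` of the wheel identifies the rim
vertices `r-1, r, 0`. On the binary representation by incidence vectors this is the linear map
that pushes vertex weights forward along the identification: its kernel is spanned by the
vectors of `y_{r-1}` and `y_r` (both lie in it, and it has dimension `(r+2) - r = 2`), so the
independent sets of the contraction are exactly the sets whose images are independent. The map
sends every element of `M_{r+1}` other than `y_{r-1}, y_r, x_{r-1}, x_0` to the corresponding
element of `M_{r-1}` (the spoke `x_r` becomes the spoke at the merged vertex), and `γ` to `γ`,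
because every fibre of the identification has odd size.
-/

theorem linearIndepOn_union_iff_comp_of_ker_eq {R ι V V' : Type*} [Ring R]
    [AddCommGroup V] [Module R V] [AddCommGroup V'] [Module R V'] {v : ι → V} {s t : Set ι}
    (T : V →ₗ[R] V') (hs : LinearIndepOn R v s)
    (hker : LinearMap.ker T = Submodule.span R (v '' s)) (hst : Disjoint s t) :
    LinearIndepOn R v (s ∪ t) ↔ LinearIndepOn R (T ∘ v) t := by
  rw [← hs.quotient_iff_union hst, ← hker]
  have hT : T ∘ v = (LinearMap.ker T).liftQ T le_rfl ∘ ((LinearMap.ker T).mkQ ∘ v) := rfl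
  rw [hT, LinearMap.linearIndepOn_iff_of_injOn _
    (LinearMap.ker_eq_bot.1 (Submodule.ker_liftQ_eq_bot _ _ _ le_rfl)).injOn]

theorem ker_eq_span_pair_of_finrank_eq_two {K V V' : Type*} [Field K] [AddCommGroup V]
    [Module K V] [FiniteDimensional K V] [AddCommGroup V'] [Module K V'] (T : V →ₗ[K] V')
    {x y : V} (hxy : LinearIndependent K ![x, y]) (hx : T x = 0) (hy : T y = 0)
    (hrank : Module.finrank K (LinearMap.ker T) = 2) :
    LinearMap.ker T = Submodule.span K {x, y} := by
  refine (Submodule.eq_of_le_of_finrank_eq ?_ ?_).symm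
  · rw [Submodule.span_le]
    rintro _ (rfl | rfl) <;> assumption
  · rw [hrank, ← Matrix.range_cons_cons_empty x y ![], finrank_span_eq_card hxy,
      Fintype.card_fin]

noncomputable def pushforward (R : Type*) {V V' : Type*} [CommSemiring R] [Fintype V]
    (P : V → V') : (V → R) →ₗ[R] (V' → R) where
  toFun z u := ∑ v with P v = u, z v
  map_add' z z' := by ext u; simp [Finset.sum_add_distrib]
  map_smul' c z := by ext u; simp [Finset.mul_sum]

section pushforward

variable {R V V' : Type*} [CommSemiring R] [Fintype V] (P : V → V')

theorem pushforward_single (a : V) (c : R) :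
    pushforward R P (Pi.single a c) = Pi.single (P a) c := by
  ext u
  simp [pushforward, Pi.single_apply, eq_comm]

theorem pushforward_surjective [Fintype V'] (hP : Function.Surjective P) :
    Function.Surjective (pushforward R P) := by
  intro z
  choose σ hσ using hP
  refine ⟨∑ u, Pi.single (σ u) (z u), ?_⟩
  simp only [map_sum, pushforward_single, hσ, Finset.univ_sum_single]

end pushforward

theorem finrank_ker_pushforward {K V V' : Type*} [Field K] [Fintype V] [Fintype V']
    {P : V → V'} (hP : Function.Surjective P) :
    Module.finrank K (LinearMap.ker (pushforward K P)) = Fintype.card V - Fintype.card V' := by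
  have h := LinearMap.finrank_range_add_finrank_ker (pushforward K P)
  rw [LinearMap.range_eq_top.2 (pushforward_surjective P hP), finrank_top,
    Module.finrank_fintype_fun_eq_card, Module.finrank_fintype_fun_eq_card] at h
  omega

theorem incVec_eq_single_add_single {V : Type*} {a b : V} (hab : a ≠ b) :
    incVec s(a, b) = Pi.single a 1 + Pi.single b 1 := by
  ext u
  by_cases ha : u = a <;> by_cases hb : u = b <;> simp_all [incVec]

theorem linearIndependent_incVec_pair {V : Type*} {a b c : V} (hab : a ≠ b) (hac : a ≠ c)
    (hbc : b ≠ c) : LinearIndependent (ZMod 2) ![incVec s(a, b), incVec s(b, c)] := by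
  rw [LinearIndependent.pair_iff]
  intro s t h
  have ha := congrFun h a
  have hc := congrFun h c
  simp [incVec, hab, hac, hac.symm, hbc.symm] at ha hc
  exact ⟨ha, hc⟩

theorem pushforward_incVec_of_ne {V V' : Type*} [Fintype V] {P : V → V'} {a b : V}
    (h : P a ≠ P b) : pushforward (ZMod 2) P (incVec s(a, b)) = incVec s(P a, P b) := by
  rw [incVec_eq_single_add_single (ne_of_apply_ne P h), incVec_eq_single_add_single h, map_add,
    pushforward_single, pushforward_single]

theorem pushforward_incVec_of_eq {V V' : Type*} [Fintype V] {P : V → V'} {a b : V}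
    (hab : a ≠ b) (h : P a = P b) : pushforward (ZMod 2) P (incVec s(a, b)) = 0 := by
  rw [incVec_eq_single_add_single hab, map_add, pushforward_single, pushforward_single, h,
    ← Pi.single_add, CharTwo.add_self_eq_zero, Pi.single_zero]

theorem indep_mDel_mCon_iff {α : Type*} {M : Matroid α} {C D I : Set α} (hC : M.Indep C)
    (hI : I ⊆ (mDel (mCon M C) D).E) : (mDel (mCon M C) D).Indep I ↔ M.Indep (I ∪ C) := by
  change (M ／ C ＼ D).Indep I ↔ _
  rw [delete_indep_iff, hC.contract_indep_iff]
  have hIC : Disjoint I C := disjoint_of_subset_left (hI.trans sdiff_subset) disjoint_sdiff_left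
  have hID : Disjoint I D := disjoint_of_subset_left hI disjoint_sdiff_left
  simp [hIC, hID]

theorem matroidIso_of_bijOn {α β : Type*} {M : Matroid α} {N : Matroid β} {f : α → β}
    (hf : BijOn f M.E N.E) (hindep : ∀ I ⊆ M.E, M.Indep I ↔ N.Indep (f '' I)) :
    MatroidIso M N := by
  refine ⟨hf.equiv f, fun I => ?_⟩
  rw [hindep _ (Subtype.coe_image_subset _ _), image_image, image_image]
  rfl

theorem matroidIso_mDel_mCon_of_isBinRepOn {α β W W' : Type*} [AddCommGroup W]
    [Module (ZMod 2) W] [AddCommGroup W'] [Module (ZMod 2) W'] {M : Matroid α} {N : Matroid β}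
    {E : Set α} {E' : Set β} {v : α → W} {w : β → W'} (hM : IsBinRepOn M E v)
    (hN : IsBinRepOn N E' w) {C D : Set α} (hCE : C ⊆ E) (hC : LinearIndepOn (ZMod 2) v C)
    (T : W →ₗ[ZMod 2] W') (hker : LinearMap.ker T = Submodule.span (ZMod 2) (v '' C))
    {f : α → β} (hf : BijOn f ((E \ C) \ D) E') (hTv : EqOn (T ∘ v) (w ∘ f) ((E \ C) \ D)) :
    MatroidIso (mDel (mCon M C) D) N := by
  obtain ⟨rfl, hMI⟩ := hM
  obtain ⟨rfl, hNI⟩ := hN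
  refine matroidIso_of_bijOn hf fun I hI => ?_
  have hIE : I ⊆ M.E := hI.trans (sdiff_subset.trans sdiff_subset)
  have hCI : Disjoint C I := disjoint_of_subset_right (hI.trans sdiff_subset) disjoint_sdiff_right
  rw [indep_mDel_mCon_iff ((hMI C hCE).2 hC) hI, hMI _ (union_subset hIE hCE),
    hNI _ ((image_mono hI).trans hf.mapsTo.image_subset)]
  change LinearIndepOn _ v (I ∪ C) ↔ LinearIndepOn _ w (f '' I)
  rw [union_comm, linearIndepOn_union_iff_comp_of_ker_eq T hC hker hCI,
    linearIndepOn_congr (hTv.mono hI)]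
  exact ⟨fun h => h.image_of_comp, fun h => h.comp_of_image (hf.injOn.mono hI)⟩

theorem ZMod.eq_natCast_iff_val_eq {m : ℕ} [NeZero m] {i : ZMod m} {a : ℕ} (ha : a < m) :
    i = a ↔ i.val = a := by
  rw [← ZMod.val_injective m |>.eq_iff, ZMod.val_cast_of_lt ha]

/-- With `r = n + 2` (so that no rim index needs truncated subtraction): the identification of
rim vertices of `W_{r+1}` caused by contracting `y_{r-1} = {r-1, r}` and `y_r = {r, 0}`. -/
def rimMerge (n : ℕ) (i : ZMod (n + 2 + 1)) : ZMod (n + 1) := if i.val ≤ n then i.val else 0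

def spokeLift (n : ℕ) (j : ZMod (n + 1)) : ZMod (n + 2 + 1) :=
  if j = 0 then ((n + 2 : ℕ) : ZMod (n + 2 + 1)) else j.val

def minorMap (n : ℕ) :
    ZMod (n + 2 + 1) ⊕ (ZMod (n + 2 + 1) ⊕ Unit) → ZMod (n + 1) ⊕ (ZMod (n + 1) ⊕ Unit) :=
  Sum.map (rimMerge n) (Sum.map (rimMerge n) id)

def minorMapInv (n : ℕ) :
    ZMod (n + 1) ⊕ (ZMod (n + 1) ⊕ Unit) → ZMod (n + 2 + 1) ⊕ (ZMod (n + 2 + 1) ⊕ Unit) :=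
  Sum.map (spokeLift n) (Sum.map (fun j => (j.val : ZMod (n + 2 + 1))) id)

abbrev minorGround (n : ℕ) : Set (ZMod (n + 2 + 1) ⊕ (ZMod (n + 2 + 1) ⊕ Unit)) :=
  (univ \ {ye (n + 2) ((n + 1 : ℕ) : ZMod (n + 2 + 1)),
      ye (n + 2) ((n + 2 : ℕ) : ZMod (n + 2 + 1))}) \
    {xe (n + 2) ((n + 1 : ℕ) : ZMod (n + 2 + 1)), xe (n + 2) 0}

section minor

variable {n : ℕ}

theorem rimMerge_of_le {i : ZMod (n + 2 + 1)} (hi : i.val ≤ n) : rimMerge n i = i.val :=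
  if_pos hi

theorem rimMerge_of_lt {i : ZMod (n + 2 + 1)} (hi : n < i.val) : rimMerge n i = 0 :=
  if_neg (by omega)

theorem rimMerge_natCast_val (j : ZMod (n + 1)) : rimMerge n (j.val : ZMod (n + 2 + 1)) = j := by
  have hj := ZMod.val_lt j
  rw [rimMerge_of_le (by rw [ZMod.val_cast_of_lt (by omega)]; omega),
    ZMod.val_cast_of_lt (by omega), ZMod.natCast_zmod_val]

theorem rimMerge_add_one {i : ZMod (n + 2 + 1)} (hi : i.val ≤ n) :
    rimMerge n (i + 1) = rimMerge n i + 1 := by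
  have h1 : (1 : ZMod (n + 2 + 1)).val = 1 := ZMod.val_one'' (by omega)
  have hval : (i + 1).val = i.val + 1 := by rw [ZMod.val_add_of_lt (by omega), h1]
  rw [rimMerge_of_le hi]
  by_cases h : i.val + 1 ≤ n
  · rw [rimMerge_of_le (hval ▸ h), hval, Nat.cast_succ]
  · rw [rimMerge_of_lt (by omega), show i.val = n by omega, ← Nat.cast_succ, ZMod.natCast_self]

theorem sum_rimMerge {A : Type*} [AddCommGroup A] [Module (ZMod 2) A] (g : ZMod (n + 1) → A) :
    ∑ i : ZMod (n + 2 + 1), g (rimMerge n i) = ∑ j, g j := by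
  change ∑ i : Fin (n + 2 + 1), g (rimMerge n i) = ∑ j : Fin (n + 1), g j
  have hlow (i : Fin (n + 1)) : rimMerge n i.castSucc.castSucc = i :=
    (rimMerge_of_le i.is_le).trans (ZMod.natCast_zmod_val (n := n + 1) i)
  have hpen : rimMerge n (Fin.last (n + 1)).castSucc = 0 := rimMerge_of_lt (Nat.lt_succ_self n)
  have hlast : rimMerge n (Fin.last (n + 2)) = 0 := rimMerge_of_lt (by simp [ZMod.val])
  rw [Fin.sum_univ_castSucc, Fin.sum_univ_castSucc, hpen, hlast, add_assoc, ← two_smul (ZMod 2),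
    show (2 : ZMod 2) = 0 from rfl, zero_smul, add_zero]
  simp only [hlow]

theorem rimMerge_spokeLift (j : ZMod (n + 1)) : rimMerge n (spokeLift n j) = j := by
  unfold spokeLift
  split_ifs with hj
  · rw [hj, rimMerge_of_lt (by rw [ZMod.val_cast_of_lt (by omega)]; omega)]
  · exact rimMerge_natCast_val j

theorem spokeLift_val_ne (j : ZMod (n + 1)) :
    (spokeLift n j).val ≠ n + 1 ∧ (spokeLift n j).val ≠ 0 := by
  unfold spokeLift
  have := ZMod.val_lt j
  split_ifs with hj
  · rw [ZMod.val_cast_of_lt (by omega)]; omega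
  · rw [ZMod.val_cast_of_lt (by omega)]
    exact ⟨by omega, fun h => hj ((ZMod.val_eq_zero j).1 h)⟩

theorem spokeLift_rimMerge {i : ZMod (n + 2 + 1)} (h1 : i.val ≠ n + 1) (h0 : i.val ≠ 0) :
    spokeLift n (rimMerge n i) = i := by
  have := ZMod.val_lt i
  by_cases hi : i.val ≤ n
  · rw [rimMerge_of_le hi, spokeLift, if_neg, ZMod.val_cast_of_lt (by omega),
      ZMod.natCast_zmod_val]
    rwa [← ZMod.val_eq_zero, ZMod.val_cast_of_lt (by omega)]
  · rw [rimMerge_of_lt (by omega), spokeLift, if_pos rfl, eq_comm,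
      ZMod.eq_natCast_iff_val_eq (by omega)]
    omega

theorem inl_mem_minorGround {i : ZMod (n + 2 + 1)} :
    Sum.inl i ∈ minorGround n ↔ i.val ≠ n + 1 ∧ i.val ≠ 0 := by
  simp only [mem_sdiff, mem_univ, mem_insert_iff, mem_singleton_iff, xe, ye, reduceCtorEq,
    Sum.inl.injEq, ZMod.eq_natCast_iff_val_eq (show n + 1 < n + 2 + 1 by omega),
    ← ZMod.val_eq_zero]
  tauto

theorem inr_inl_mem_minorGround {i : ZMod (n + 2 + 1)} :
    Sum.inr (Sum.inl i) ∈ minorGround n ↔ i.val ≤ n := by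
  have := ZMod.val_lt i
  simp only [mem_sdiff, mem_univ, mem_insert_iff, mem_singleton_iff, xe, ye, reduceCtorEq,
    Sum.inr.injEq, Sum.inl.injEq, ZMod.eq_natCast_iff_val_eq (show n + 1 < n + 2 + 1 by omega),
    ZMod.eq_natCast_iff_val_eq (show n + 2 < n + 2 + 1 by omega), or_false, not_false_eq_true,
    true_and, and_true]
  omega

theorem bijOn_minorMap : BijOn (minorMap n) (minorGround n) univ := by
  refine InvOn.bijOn (f' := minorMapInv n) ⟨?_, ?_⟩ (mapsTo_univ _ _) ?_
  · rintro (i | i | u) ha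
    · obtain ⟨h1, h0⟩ := inl_mem_minorGround.1 ha
      exact congrArg Sum.inl (spokeLift_rimMerge h1 h0)
    · have hi := inr_inl_mem_minorGround.1 ha
      change Sum.inr (Sum.inl ((rimMerge n i).val : ZMod (n + 2 + 1))) = _
      rw [rimMerge_of_le hi, ZMod.val_cast_of_lt (by omega), ZMod.natCast_zmod_val]
    · rfl
  · rintro (j | j | u) -
    · exact congrArg Sum.inl (rimMerge_spokeLift j)
    · exact congrArg (Sum.inr ∘ Sum.inl) (rimMerge_natCast_val j)
    · rfl
  · rintro (j | j | u) -
    · exact inl_mem_minorGround.2 (spokeLift_val_ne j)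
    · have := ZMod.val_lt j
      exact inr_inl_mem_minorGround.2 ((ZMod.val_cast_of_lt (by omega)).trans_le (by omega))
    · simp [minorMapInv, xe, ye]

theorem pushforward_comp_mWVec_eqOn (hn : 1 ≤ n) :
    EqOn (pushforward (ZMod 2) (Option.map (rimMerge n)) ∘ mWVec (n + 2)) (mWVec n ∘ minorMap n)
      (minorGround n) := by
  rintro (i | i | u) ha
  · exact pushforward_incVec_of_ne (Option.some_ne_none _).symm
  · have : Fact (1 < n + 1) := ⟨by omega⟩
    change pushforward _ _ (incVec s(some i, some (i + 1))) =
      incVec s(some (rimMerge n i), some (rimMerge n i + 1))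
    have hi := rimMerge_add_one (inr_inl_mem_minorGround.1 ha)
    rw [pushforward_incVec_of_ne (by simp [hi]), Option.map_some, Option.map_some, hi]
  · change pushforward _ _ (∑ i, incVec s(none, some i)) = ∑ j, incVec s(none, some j)
    rw [map_sum, Finset.sum_congr rfl fun i _ =>
      pushforward_incVec_of_ne (P := Option.map (rimMerge n)) (a := none) (b := some i)
        (Option.some_ne_none (rimMerge n i)).symm]
    exact sum_rimMerge fun j => incVec s(none, some j)

theorem mWVec_ye_contracted :
    mWVec (n + 2) (ye (n + 2) ((n + 1 : ℕ) : ZMod (n + 2 + 1))) =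
        incVec s(some ((n + 1 : ℕ) : ZMod (n + 2 + 1)),
          some ((n + 2 : ℕ) : ZMod (n + 2 + 1))) ∧
      mWVec (n + 2) (ye (n + 2) ((n + 2 : ℕ) : ZMod (n + 2 + 1))) =
        incVec s(some ((n + 2 : ℕ) : ZMod (n + 2 + 1)), some 0) := by
  refine ⟨?_, ?_⟩
  · change incVec s(_, some (_ + 1)) = _
    rw [← Nat.cast_succ]
  · change incVec s(_, some (_ + 1)) = _
    rw [← Nat.cast_succ, ZMod.natCast_self]

theorem contracted_vertices_ne :
    ((n + 1 : ℕ) : ZMod (n + 2 + 1)) ≠ ((n + 2 : ℕ) : ZMod (n + 2 + 1)) ∧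
      ((n + 1 : ℕ) : ZMod (n + 2 + 1)) ≠ 0 ∧ ((n + 2 : ℕ) : ZMod (n + 2 + 1)) ≠ 0 := by
  refine ⟨?_, ?_, ?_⟩ <;> rw [Ne, ← ZMod.val_injective _ |>.eq_iff] <;>
    simp only [ZMod.val_zero, ZMod.val_cast_of_lt (show n + 1 < n + 2 + 1 by omega),
      ZMod.val_cast_of_lt (show n + 2 < n + 2 + 1 by omega)] <;> omega

theorem linearIndependent_incVec_contracted :
    LinearIndependent (ZMod 2)
      ![incVec s(some ((n + 1 : ℕ) : ZMod (n + 2 + 1)), some ((n + 2 : ℕ) : ZMod (n + 2 + 1))),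
        incVec s(some ((n + 2 : ℕ) : ZMod (n + 2 + 1)), some 0)] :=
  have ⟨h12, h10, h20⟩ := contracted_vertices_ne (n := n)
  linearIndependent_incVec_pair (Option.some_injective _ |>.ne h12)
    (Option.some_injective _ |>.ne h10) (Option.some_injective _ |>.ne h20)

theorem linearIndepOn_mWVec_contracted :
    LinearIndepOn (ZMod 2) (mWVec (n + 2))
      {ye (n + 2) ((n + 1 : ℕ) : ZMod (n + 2 + 1)),
        ye (n + 2) ((n + 2 : ℕ) : ZMod (n + 2 + 1))} := by
  refine (LinearIndepOn.pair_iff (i := ye (n + 2) ((n + 1 : ℕ) : ZMod (n + 2 + 1)))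
    (j := ye (n + 2) ((n + 2 : ℕ) : ZMod (n + 2 + 1))) _
    (Sum.inr_injective.ne (Sum.inl_injective.ne contracted_vertices_ne.1))).2 ?_
  rw [mWVec_ye_contracted.1, mWVec_ye_contracted.2]
  exact LinearIndependent.pair_iff.1 linearIndependent_incVec_contracted

theorem ker_pushforward_rimMerge :
    LinearMap.ker (pushforward (ZMod 2) (Option.map (rimMerge n))) =
      Submodule.span (ZMod 2) (mWVec (n + 2) ''
        {ye (n + 2) ((n + 1 : ℕ) : ZMod (n + 2 + 1)),
          ye (n + 2) ((n + 2 : ℕ) : ZMod (n + 2 + 1))}) := by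
  have hsurj : Function.Surjective (Option.map (rimMerge n)) := by
    rintro (_ | j)
    exacts [⟨none, rfl⟩, ⟨some _, congrArg some (rimMerge_natCast_val j)⟩]
  have h1 : rimMerge n ((n + 1 : ℕ) : ZMod (n + 2 + 1)) = 0 :=
    rimMerge_of_lt (by rw [ZMod.val_cast_of_lt (by omega)]; omega)
  have h2 : rimMerge n ((n + 2 : ℕ) : ZMod (n + 2 + 1)) = 0 :=
    rimMerge_of_lt (by rw [ZMod.val_cast_of_lt (by omega)]; omega)
  have h0 : rimMerge n 0 = 0 := by rw [rimMerge_of_le (by simp), ZMod.val_zero, Nat.cast_zero]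
  obtain ⟨h12, -, h20⟩ := contracted_vertices_ne (n := n)
  rw [image_pair, mWVec_ye_contracted.1, mWVec_ye_contracted.2]
  refine ker_eq_span_pair_of_finrank_eq_two _ linearIndependent_incVec_contracted ?_ ?_ ?_
  · exact pushforward_incVec_of_eq (Option.some_injective _ |>.ne h12)
      (by rw [Option.map_some, Option.map_some, h1, h2])
  · exact pushforward_incVec_of_eq (Option.some_injective _ |>.ne h20)
      (by rw [Option.map_some, Option.map_some, h2, h0])
  · rw [finrank_ker_pushforward hsurj]
    simp [Fintype.card_option, ZMod.card]

end minor

theorem statement10_general (r : ℕ) (hr : 6 ≤ r)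
    (M : Matroid (ZMod (r + 1) ⊕ (ZMod (r + 1) ⊕ Unit)))
    (hM : IsBinRepOn M univ (mWVec r))
    (N : Matroid (ZMod (r - 2 + 1) ⊕ (ZMod (r - 2 + 1) ⊕ Unit)))
    (hN : IsBinRepOn N univ (mWVec (r - 2))) :
    MatroidIso
      (mDel (mCon M {ye r (((r - 1 : ℕ) : ZMod (r + 1))), ye r (((r : ℕ) : ZMod (r + 1)))})
        {xe r (((r - 1 : ℕ) : ZMod (r + 1))), xe r 0}) N := by
  obtain ⟨n, rfl⟩ : ∃ n, r = n + 2 := ⟨r - 2, by omega⟩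
  exact matroidIso_mDel_mCon_of_isBinRepOn hM hN (subset_univ _) linearIndepOn_mWVec_contracted
    _ ker_pushforward_rimMerge bijOn_minorMap (pushforward_comp_mWVec_eqOn (by omega))

/-- For even `r ≥ 6`, the minor `M_{r+1} / {y_{r-1}, y_r} \ {x_{r-1}, x_0}` is isomorphic
to `M_{r-1}`; equivalently (by duality), `Υ_r^*` is obtained from `Υ_{r+2}^*` by this
contraction and deletion. -/
theorem statement10 (r : ℕ) (hr : 6 ≤ r) (hre : Even r)
    (M : Matroid (ZMod (r + 1) ⊕ (ZMod (r + 1) ⊕ Unit)))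
    (hM : IsBinRepOn M univ (mWVec r))
    (N : Matroid (ZMod (r - 2 + 1) ⊕ (ZMod (r - 2 + 1) ⊕ Unit)))
    (hN : IsBinRepOn N univ (mWVec (r - 2))) :
    MatroidIso
      (mDel (mCon M {ye r (((r - 1 : ℕ) : ZMod (r + 1))), ye r (((r : ℕ) : ZMod (r + 1)))})
        {xe r (((r - 1 : ℕ) : ZMod (r + 1))), xe r 0}) N :=
  statement10_general r hr M hM N hN
end
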